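/- Under the same setup (Ṙ = RΩ̂, Ṙ_d = R_dΩ̂_d, e_R = ((1/2)(R_dᵀR − RᵀR_d))ᵛ, e_Ω = Ω − RᵀR_dΩ_d), the time derivative of e_R satisfies ė_R = (1/2)(tr(RᵀR_d)I − RᵀR_d)e_Ω, and consequently ‖ė_R‖ ≤ ‖e_Ω‖. -/

import Mathlib

/-!
Differentiating `R_dᵀ R` along `Ṙ = R Ω̂`, `Ṙ_d = R_d Ω̂_d` and using
`Mᵀ x̂ + x̂ M = (((tr M) I - M) x)^` gives `ė_R`, once the Cayley–Hamilton relation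
`((tr Q) I - Q) Q = (tr Q) I - Qᵀ` of `Q = Rᵀ R_d ∈ SO(3)` turns `((tr Q) I - Qᵀ) Ω_d` into
`((tr Q) I - Q) Q Ω_d`.

For the bound write `c = tr Q`, `s = xᵀ Q x`, `p = |x|²`, so that
`4 |errorMatrix Q *ᵥ x|² = c² p - 2 c s + p`. Then `s ≤ p` since `Q` is an isometry, and
`(1 + c) (2 s - (c - 1) p) = (w ⬝ x)² ≥ 0` for `w = (Q - Qᵀ)ᵛ`, whose squared length
`(1 + c) (3 - c)` forces `-1 ≤ c ≤ 3`; these give `c² p - 2 c s ≤ 3 p`.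
-/

open Matrix
noncomputable section

/-- `SO3 R` : `R` is a rotation matrix. -/
def SO3 (R : Matrix (Fin 3) (Fin 3) ℝ) : Prop := Rᵀ * R = 1 ∧ R.det = 1

/-- Attitude error function `Ψ(R,R_d) = ½ tr(I − R_dᵀ R)`. -/
def Psi (R Rd : Matrix (Fin 3) (Fin 3) ℝ) : ℝ := (1/2) * (1 - Rdᵀ * R).trace

/-- The hat map identifying `ℝ³` with skew-symmetric matrices. -/
def hat (x : Fin 3 → ℝ) : Matrix (Fin 3) (Fin 3) ℝ :=
  !![0, -x 2, x 1; x 2, 0, -x 0; -x 1, x 0, 0]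

/-- The vee map, inverse of the hat map on skew-symmetric matrices. -/
def vee (A : Matrix (Fin 3) (Fin 3) ℝ) : Fin 3 → ℝ := ![A 2 1, A 0 2, A 1 0]

/-- Attitude error vector `e_R = (½ (R_dᵀ R − Rᵀ R_d))ᵛ`. -/
def eR (R Rd : Matrix (Fin 3) (Fin 3) ℝ) : Fin 3 → ℝ :=
  vee ((1/2 : ℝ) • (Rdᵀ * R - Rᵀ * Rd))

/-- Euclidean dot product on `ℝ³`. -/
def dot (x y : Fin 3 → ℝ) : ℝ := ∑ i, x i * y i

/-- Euclidean norm on `ℝ³`. -/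
def enorm (x : Fin 3 → ℝ) : ℝ := Real.sqrt (dot x x)

/-- Cross product on `ℝ³`. -/
def cross (x y : Fin 3 → ℝ) : Fin 3 → ℝ :=
  ![x 1 * y 2 - x 2 * y 1, x 2 * y 0 - x 0 * y 2, x 0 * y 1 - x 1 * y 0]

lemma hat_transpose (x : Fin 3 → ℝ) : (hat x)ᵀ = -hat x := by
  ext i j; fin_cases i <;> fin_cases j <;> simp [hat]

lemma hat_sub (x y : Fin 3 → ℝ) : hat (x - y) = hat x - hat y := by
  ext i j; fin_cases i <;> fin_cases j <;> simp [hat] <;> ring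

lemma hat_smul (r : ℝ) (x : Fin 3 → ℝ) : hat (r • x) = r • hat x := by
  ext i j; fin_cases i <;> fin_cases j <;> simp [hat]

lemma vee_hat (x : Fin 3 → ℝ) : vee (hat x) = x := by
  ext i; fin_cases i <;> simp [hat, vee]

lemma hat_vee_sub_transpose (M : Matrix (Fin 3) (Fin 3) ℝ) : hat (vee (M - Mᵀ)) = M - Mᵀ := by
  ext i j; fin_cases i <;> fin_cases j <;> simp [hat, vee]

lemma hat_mul_hat_self (x : Fin 3 → ℝ) :
    hat x * hat x = vecMulVec x x - (x ⬝ᵥ x) • (1 : Matrix (Fin 3) (Fin 3) ℝ) := by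
  ext i j; fin_cases i <;> fin_cases j <;>
    simp [hat, vecMulVec_apply, dotProduct, Matrix.mul_apply, Fin.sum_univ_three] <;>
    ring

lemma transpose_mul_hat_add_hat_mul (M : Matrix (Fin 3) (Fin 3) ℝ) (x : Fin 3 → ℝ) :
    Mᵀ * hat x + hat x * M = hat ((M.trace • (1 : Matrix (Fin 3) (Fin 3) ℝ) - M) *ᵥ x) := by
  ext i j; fin_cases i <;> fin_cases j <;>
    simp [hat, Matrix.mul_apply, Matrix.mulVec, Matrix.vecMul, dotProduct, Fin.sum_univ_three,
      Matrix.trace_fin_three, Matrix.one_apply] <;> ring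

lemma transpose_mul_hat_skew_eq (R Rd : Matrix (Fin 3) (Fin 3) ℝ) (Ω Ωd : Fin 3 → ℝ) :
    ((Rd * hat Ωd)ᵀ * R + Rdᵀ * (R * hat Ω)) - ((R * hat Ω)ᵀ * Rd + Rᵀ * (Rd * hat Ωd)) =
      hat (((Rᵀ * Rd).trace • (1 : Matrix (Fin 3) (Fin 3) ℝ) - Rᵀ * Rd) *ᵥ Ω) -
        hat (((Rᵀ * Rd).trace • (1 : Matrix (Fin 3) (Fin 3) ℝ) - (Rᵀ * Rd)ᵀ) *ᵥ Ωd) := by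
  rw [← transpose_mul_hat_add_hat_mul, ← trace_transpose (Rᵀ * Rd), ← transpose_mul_hat_add_hat_mul]
  simp only [Matrix.transpose_mul, hat_transpose, transpose_transpose, Matrix.neg_mul]
  noncomm_ring

/-- Cayley–Hamilton for `3 × 3` matrices, solved for the adjugate. -/
lemma adjugate_fin_three_eq (M : Matrix (Fin 3) (Fin 3) ℝ) :
    M.adjugate = M * M - M.trace • M +
      ((M.trace ^ 2 - (M * M).trace) / 2) • (1 : Matrix (Fin 3) (Fin 3) ℝ) := by
  rw [adjugate_fin_three]
  ext i j; fin_cases i <;> fin_cases j <;>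
    simp [Matrix.mul_apply, Fin.sum_univ_three, Matrix.trace_fin_three] <;> ring

def errorMatrix (Q : Matrix (Fin 3) (Fin 3) ℝ) : Matrix (Fin 3) (Fin 3) ℝ :=
  (1/2 : ℝ) • (Q.trace • (1 : Matrix (Fin 3) (Fin 3) ℝ) - Q)

namespace SO3

variable {Q : Matrix (Fin 3) (Fin 3) ℝ}

lemma mul_transpose (hQ : SO3 Q) : Q * Qᵀ = 1 := mul_eq_one_comm.mp hQ.1

lemma transpose_mul {R S : Matrix (Fin 3) (Fin 3) ℝ} (hR : SO3 R) (hS : SO3 S) : SO3 (Rᵀ * S) := by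
  refine ⟨?_, by rw [det_mul, det_transpose, hR.2, hS.2, one_mul]⟩
  rw [Matrix.transpose_mul, transpose_transpose, Matrix.mul_assoc, ← Matrix.mul_assoc R,
    hR.mul_transpose, Matrix.one_mul, hS.1]

lemma adjugate_eq (hQ : SO3 Q) : Q.adjugate = Qᵀ := by
  calc Q.adjugate = (Qᵀ * Q) * Q.adjugate := by rw [hQ.1, Matrix.one_mul]
    _ = Qᵀ := by rw [Matrix.mul_assoc, mul_adjugate, hQ.2, one_smul, Matrix.mul_one]

lemma mul_self (hQ : SO3 Q) :
    Q * Q = Qᵀ + Q.trace • Q - Q.trace • (1 : Matrix (Fin 3) (Fin 3) ℝ) := by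
  have hCH := adjugate_fin_three_eq Q
  rw [hQ.adjugate_eq] at hCH
  have hcoeff : (Q.trace ^ 2 - (Q * Q).trace) / 2 = Q.trace := by
    have h := congrArg Matrix.trace hCH
    simp only [trace_transpose, trace_add, trace_sub, trace_smul, trace_one, Fintype.card_fin,
      smul_eq_mul] at h
    linarith
  rw [hcoeff] at hCH
  rw [hCH]
  abel

lemma trace_smul_sub_mul_self (hQ : SO3 Q) :
    (Q.trace • (1 : Matrix (Fin 3) (Fin 3) ℝ) - Q) * Q = Q.trace • 1 - Qᵀ := by
  rw [Matrix.sub_mul, smul_mul_assoc, Matrix.one_mul, hQ.mul_self]; abel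

lemma sub_transpose_mul_self (hQ : SO3 Q) :
    (Q - Qᵀ) * (Q - Qᵀ) =
      (1 + Q.trace) • (Q + Qᵀ) - (2 * (1 + Q.trace)) • (1 : Matrix (Fin 3) (Fin 3) ℝ) := by
  have hT : Qᵀ * Qᵀ = Q + Q.trace • Qᵀ - Q.trace • (1 : Matrix (Fin 3) (Fin 3) ℝ) := by
    simpa [Matrix.transpose_mul] using congrArg Matrix.transpose hQ.mul_self
  have h : (Q - Qᵀ) * (Q - Qᵀ) = Q * Q + Qᵀ * Qᵀ - Q * Qᵀ - Qᵀ * Q := by noncomm_ring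
  rw [h, hQ.mul_self, hT, hQ.mul_transpose, hQ.1]
  module

lemma dotProduct_vee_self (hQ : SO3 Q) :
    vee (Q - Qᵀ) ⬝ᵥ vee (Q - Qᵀ) = (1 + Q.trace) * (3 - Q.trace) := by
  have h := congrArg Matrix.trace (hat_mul_hat_self (vee (Q - Qᵀ)))
  rw [hat_vee_sub_transpose, hQ.sub_transpose_mul_self] at h
  simp only [trace_sub, trace_smul, trace_add, trace_transpose, trace_one, trace_vecMulVec,
    Fintype.card_fin, Nat.cast_ofNat, smul_eq_mul] at h
  linarith

lemma vecMulVec_vee (hQ : SO3 Q) :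
    vecMulVec (vee (Q - Qᵀ)) (vee (Q - Qᵀ)) =
      (1 + Q.trace) • (Q + Qᵀ) +
        ((1 + Q.trace) * (1 - Q.trace)) • (1 : Matrix (Fin 3) (Fin 3) ℝ) := by
  have h := hat_mul_hat_self (vee (Q - Qᵀ))
  rw [hat_vee_sub_transpose, hQ.sub_transpose_mul_self, hQ.dotProduct_vee_self] at h
  rw [← sub_eq_zero] at h ⊢
  rw [← neg_eq_zero, ← h]
  module

lemma dotProduct_mulVec_self (hQ : SO3 Q) (x : Fin 3 → ℝ) : Q *ᵥ x ⬝ᵥ Q *ᵥ x = x ⬝ᵥ x := by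
  rw [dotProduct_mulVec, vecMul_mulVec, hQ.1, vecMul_one]

lemma dotProduct_mulVec_le (hQ : SO3 Q) (x : Fin 3 → ℝ) : x ⬝ᵥ Q *ᵥ x ≤ x ⬝ᵥ x := by
  have h := dotProduct_self_star_nonneg (x - Q *ᵥ x)
  simp only [star_trivial, dotProduct_sub, sub_dotProduct, dotProduct_comm (Q *ᵥ x) x,
    hQ.dotProduct_mulVec_self] at h
  linarith

lemma sq_dotProduct_vee (hQ : SO3 Q) (x : Fin 3 → ℝ) :
    (vee (Q - Qᵀ) ⬝ᵥ x) ^ 2 =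
      (1 + Q.trace) * (2 * (x ⬝ᵥ Q *ᵥ x) - (Q.trace - 1) * (x ⬝ᵥ x)) := by
  have h := congrArg (fun M => x ⬝ᵥ M *ᵥ x) hQ.vecMulVec_vee
  have hT : x ⬝ᵥ Qᵀ *ᵥ x = x ⬝ᵥ Q *ᵥ x := by
    rw [mulVec_transpose, dotProduct_comm, ← dotProduct_mulVec]
  simp only [vecMulVec_mulVec, add_mulVec, smul_mulVec, one_mulVec, dotProduct_add,
    dotProduct_smul, hT, smul_eq_mul, op_smul_eq_smul] at h
  rw [dotProduct_comm x] at h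
  linear_combination h

lemma dotProduct_errorMatrix_mulVec_le (hQ : SO3 Q) (x : Fin 3 → ℝ) :
    errorMatrix Q *ᵥ x ⬝ᵥ errorMatrix Q *ᵥ x ≤ x ⬝ᵥ x := by
  set c := Q.trace
  set p := x ⬝ᵥ x
  set s := x ⬝ᵥ Q *ᵥ x
  have hexpand : errorMatrix Q *ᵥ x ⬝ᵥ errorMatrix Q *ᵥ x = (c ^ 2 * p - 2 * c * s + p) / 4 := by
    simp only [errorMatrix, smul_mulVec, sub_mulVec, one_mulVec, dotProduct_smul, smul_dotProduct,
      dotProduct_sub, sub_dotProduct, dotProduct_comm (Q *ᵥ x) x, hQ.dotProduct_mulVec_self,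
      smul_eq_mul]
    ring
  have hp : 0 ≤ p := by simpa using dotProduct_self_star_nonneg x
  have hs : s ≤ p := hQ.dotProduct_mulVec_le x
  have hw : 0 ≤ (1 + c) * (3 - c) :=
    hQ.dotProduct_vee_self ▸ by simpa using dotProduct_self_star_nonneg (vee (Q - Qᵀ))
  have hq : 0 ≤ (1 + c) * (2 * s - (c - 1) * p) := hQ.sq_dotProduct_vee x ▸ sq_nonneg _
  rw [hexpand]
  rcases le_or_gt 0 c with hc | hc
  · have h2s : 0 ≤ 2 * s - (c - 1) * p := by nlinarith
    have hc3 : c ≤ 3 := by nlinarith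
    nlinarith [mul_nonneg hc h2s, mul_nonneg (by linarith : (0:ℝ) ≤ 3 - c) hp]
  · have hcm : -1 ≤ c := by nlinarith
    nlinarith [mul_le_mul_of_nonneg_left hs (by linarith : (0:ℝ) ≤ -c),
      mul_nonneg (mul_nonneg (by linarith : (0:ℝ) ≤ 3 - c) (by linarith : (0:ℝ) ≤ c + 1)) hp]

lemma enorm_errorMatrix_mulVec_le (hQ : SO3 Q) (x : Fin 3 → ℝ) :
    _root_.enorm (errorMatrix Q *ᵥ x) ≤ _root_.enorm x :=
  Real.sqrt_le_sqrt (hQ.dotProduct_errorMatrix_mulVec_le x)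

end SO3

lemma hasDerivAt_mul_apply {m n o : Type*} [Fintype n] {A : ℝ → Matrix m n ℝ}
    {B : ℝ → Matrix n o ℝ} {A' : Matrix m n ℝ} {B' : Matrix n o ℝ} {t : ℝ}
    (hA : ∀ i j, HasDerivAt (fun τ => A τ i j) (A' i j) t)
    (hB : ∀ i j, HasDerivAt (fun τ => B τ i j) (B' i j) t) (i : m) (k : o) :
    HasDerivAt (fun τ => (A τ * B τ) i k) ((A' * B t + A t * B') i k) t := by
  simp only [Matrix.add_apply, Matrix.mul_apply, ← Finset.sum_add_distrib]
  exact HasDerivAt.fun_sum fun j _ => (hA i j).mul (hB j k)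

lemma hasDerivAt_vee_apply {A : ℝ → Matrix (Fin 3) (Fin 3) ℝ} {A' : Matrix (Fin 3) (Fin 3) ℝ}
    {t : ℝ} (hA : ∀ i j, HasDerivAt (fun τ => A τ i j) (A' i j) t) (k : Fin 3) :
    HasDerivAt (fun τ => vee (A τ) k) (vee A' k) t := by
  fin_cases k <;> exact hA _ _

lemma hasDerivAt_eR {R Rd : ℝ → Matrix (Fin 3) (Fin 3) ℝ} {R' Rd' : Matrix (Fin 3) (Fin 3) ℝ}
    {t : ℝ} (hR : ∀ i j, HasDerivAt (fun τ => R τ i j) (R' i j) t)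
    (hRd : ∀ i j, HasDerivAt (fun τ => Rd τ i j) (Rd' i j) t) (k : Fin 3) :
    HasDerivAt (fun τ => eR (R τ) (Rd τ) k)
      (vee ((1/2 : ℝ) • ((Rd'ᵀ * R t + (Rd t)ᵀ * R') - (R'ᵀ * Rd t + (R t)ᵀ * Rd'))) k) t := by
  refine hasDerivAt_vee_apply (fun i j => ?_) k
  simp only [Matrix.smul_apply, Matrix.sub_apply, smul_eq_mul]
  exact ((hasDerivAt_mul_apply (fun i j => hRd j i) hR i j).sub
    (hasDerivAt_mul_apply (fun i j => hR j i) hRd i j)).const_mul _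

theorem eR_dot (R Rd : ℝ → Matrix (Fin 3) (Fin 3) ℝ)
    (Ω Ωd : ℝ → Fin 3 → ℝ) (t : ℝ)
    (hSO : ∀ s, SO3 (R s)) (hSOd : ∀ s, SO3 (Rd s))
    (hR : ∀ s i j, HasDerivAt (fun τ => R τ i j) ((R s * hat (Ω s)) i j) s)
    (hRd : ∀ s i j, HasDerivAt (fun τ => Rd τ i j) ((Rd s * hat (Ωd s)) i j) s)
    (eΩ : Fin 3 → ℝ) (heΩ : eΩ = Ω t - ((R t)ᵀ * Rd t).mulVec (Ωd t))
    (eRdot : Fin 3 → ℝ)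
    (heRdot : eRdot =
      (((1/2 : ℝ) • (((R t)ᵀ * Rd t).trace • (1 : Matrix (Fin 3) (Fin 3) ℝ) - (R t)ᵀ * Rd t)).mulVec eΩ)) :
    (∀ i, HasDerivAt (fun τ => eR (R τ) (Rd τ) i) (eRdot i) t) ∧ _root_.enorm eRdot ≤ _root_.enorm eΩ := by
  have hQ : SO3 ((R t)ᵀ * Rd t) := (hSO t).transpose_mul (hSOd t)
  have hskew : (1/2 : ℝ) • (((Rd t * hat (Ωd t))ᵀ * R t + (Rd t)ᵀ * (R t * hat (Ω t))) -
      ((R t * hat (Ω t))ᵀ * Rd t + (R t)ᵀ * (Rd t * hat (Ωd t)))) = hat eRdot := by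
    rw [transpose_mul_hat_skew_eq, ← hQ.trace_smul_sub_mul_self, ← mulVec_mulVec, ← hat_sub,
      ← mulVec_sub, ← hat_smul, ← smul_mulVec, ← heΩ, heRdot]
  refine ⟨fun k => ?_, heRdot ▸ hQ.enorm_errorMatrix_mulVec_le eΩ⟩
  have h := hasDerivAt_eR (hR t) (hRd t) k
  rwa [hskew, vee_hat] at h
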